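/- arXiv:2309.11882 — 2 statements merged into one kernel-verified Lean document; each statement's English description precedes it below -/
import Mathlib

section
/- Let N : (0, ∞) → ℝ be differentiable and suppose that for all τ > 0, (d/dτ)(τ N(τ)) = W(τ) where W(τ) ≥ −τ A + N(τ) − n/2 for constants A > 0 and n > 0. Then for all 0 < τ₁ ≤ τ₂, N(τ₂) ≥ N(τ₁) − ((τ₂ − τ₁) A + (n/2) log(τ₂/τ₁)). -/
/-!
Dividing `(τ N)' = W` by `τ` gives `N' = (W - N) / τ ≥ -(A + n / (2 τ))`, and the right-hand side
is the derivative of `-(A τ + (n / 2) log τ)`. Comparing the increments of these two functions over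
`[τ₁, τ₂] ⊆ (0, ∞)` by the mean value theorem gives the bound.
-/

open Set

lemma HasDerivAt.of_mul_id {f : ℝ → ℝ} {w t : ℝ}
    (h : HasDerivAt (fun s => s * f s) w t) (ht : t ≠ 0) :
    HasDerivAt f ((w - f t) / t) t := by
  have hquot : HasDerivAt (fun s => s * f s / s) ((w * t - t * f t * 1) / t ^ 2) t :=
    h.div (hasDerivAt_id t) ht
  have heq : (fun s => s * f s / s) =ᶠ[nhds t] f := by
    filter_upwards [eventually_ne_nhds ht] with s hs
    field_simp
  have hf : HasDerivAt f ((w * t - t * f t * 1) / t ^ 2) t :=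
    hquot.congr_of_eventuallyEq heq.symm
  convert hf using 1
  field_simp

lemma sub_le_sub_of_hasDerivAt_le_of_pos {f g f' g' : ℝ → ℝ}
    (hf : ∀ x > 0, HasDerivAt f (f' x) x) (hg : ∀ x > 0, HasDerivAt g (g' x) x)
    (hle : ∀ x > 0, g' x ≤ f' x) {a b : ℝ} (ha : 0 < a) (hab : a ≤ b) :
    g b - g a ≤ f b - f a := by
  have hderiv : ∀ x > 0, HasDerivAt (f - g) (f' x - g' x) x :=
    fun x hx => (hf x hx).sub (hg x hx)
  have hmono : MonotoneOn (f - g) (Ioi 0) := by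
    refine monotoneOn_of_hasDerivWithinAt_nonneg (f' := fun x => f' x - g' x) (convex_Ioi 0)
      (fun x hx => (hderiv x hx).continuousAt.continuousWithinAt) ?_ ?_ <;>
      rw [interior_Ioi]
    · exact fun x hx => (hderiv x hx).hasDerivWithinAt
    · exact fun x hx => sub_nonneg.2 (hle x hx)
  have hincr := hmono (mem_Ioi.2 ha) (mem_Ioi.2 (ha.trans_le hab)) hab
  simp only [Pi.sub_apply] at hincr
  linarith

theorem stmt_5_general (n A : ℝ) (N W : ℝ → ℝ)
    (hder : ∀ τ > (0:ℝ), HasDerivAt (fun s => s * N s) (W τ) τ)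
    (hW : ∀ τ > (0:ℝ), -τ * A + N τ - n / 2 ≤ W τ) :
    ∀ τ₁ τ₂ : ℝ, 0 < τ₁ → τ₁ ≤ τ₂ →
      N τ₁ - ((τ₂ - τ₁) * A + n / 2 * Real.log (τ₂ / τ₁)) ≤ N τ₂ := by
  intro τ₁ τ₂ h₁ h₁₂
  have hN : ∀ τ > (0:ℝ), HasDerivAt N ((W τ - N τ) / τ) τ :=
    fun τ hτ => (hder τ hτ).of_mul_id hτ.ne'
  have hprimitive : ∀ τ > (0:ℝ),
      HasDerivAt (fun s => -(A * s + n / 2 * Real.log s)) (-(A + n / 2 * τ⁻¹)) τ := by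
    intro τ hτ
    have h := (((hasDerivAt_id' τ).const_mul A).add
      ((Real.hasDerivAt_log hτ.ne').const_mul (n / 2))).neg
    rwa [mul_one] at h
  have hslope : ∀ τ > (0:ℝ), -(A + n / 2 * τ⁻¹) ≤ (W τ - N τ) / τ := by
    intro τ hτ
    rw [le_div_iff₀ hτ]
    have hWτ := hW τ hτ
    field_simp
    linarith
  have key := sub_le_sub_of_hasDerivAt_le_of_pos hN hprimitive hslope h₁ h₁₂
  rw [Real.log_div (h₁.trans_le h₁₂).ne' h₁.ne']
  linarith

/-- Lemma 4.2 (quantitative lower-monotonicity of the pointed Nash entropy):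
(τN)' = W with W ≥ -τA + N - n/2 implies
N(τ₂) ≥ N(τ₁) - ((τ₂-τ₁)A + (n/2) log(τ₂/τ₁)). -/
theorem stmt_5 (n A : ℝ) (hn : 0 < n) (hA : 0 < A) (N W : ℝ → ℝ)
    (hder : ∀ τ > (0:ℝ), HasDerivAt (fun s => s * N s) (W τ) τ)
    (hW : ∀ τ > (0:ℝ), -τ * A + N τ - n / 2 ≤ W τ) :
    ∀ τ₁ τ₂ : ℝ, 0 < τ₁ → τ₁ ≤ τ₂ →
      N τ₁ - ((τ₂ - τ₁) * A + n / 2 * Real.log (τ₂ / τ₁)) ≤ N τ₂ :=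
  stmt_5_general n A N W hder hW
end

section
/- Let N : (0, ∞) → ℝ be continuously differentiable, non-increasing, with (d/dτ)(τ N(τ)) =: W(τ) non-increasing in τ, N ≤ 0, and suppose N(δ⁻¹) ≥ N(δ) − δ for some δ ∈ (0, 1). Then for every ζ ∈ (δ, 1) and every τ ∈ [ζ, ζ⁻¹], W(τ) ≥ (δ⁻¹/(δ⁻¹ − ζ⁻¹)) (N(1) − δ); in particular, if additionally W(τ) ≤ N(τ) ≤ N(1) + δ for all τ ∈ [δ, δ⁻¹], then |W(τ) − N(1)| ≤ ζ for τ ∈ [ζ, ζ⁻¹] provided δ is sufficiently small depending on ζ and a lower bound N(1) ≥ −κ. -/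
/-!
Since `(τ N)' = W` is non-increasing, `τ ↦ τ N(τ)` is concave, so between `ζ⁻¹` and `δ⁻¹` it grows
at most at rate `W(ζ⁻¹)`. As `ζ⁻¹ N(ζ⁻¹) ≤ 0` and `N(δ⁻¹) ≥ N(δ) - δ ≥ N(1) - δ`, this gives
`δ⁻¹ (N(1) - δ) ≤ W(ζ⁻¹) (δ⁻¹ - ζ⁻¹)`, and monotonicity of `W` extends the bound to `[ζ, ζ⁻¹]`.
The factor `δ⁻¹ / (δ⁻¹ - ζ⁻¹) = ζ / (ζ - δ)` tends to `1` as `δ → 0`, which together with the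
upper bound `W ≤ N ≤ N(1) + δ` pins `W` near `N(1)`.
-/

open Set

theorem sub_le_mul_sub_of_hasDerivAt_of_antitoneOn {F f : ℝ → ℝ} {a b : ℝ} (hab : a ≤ b)
    (hF : ∀ x ∈ Icc a b, HasDerivAt F (f x) x) (hf : AntitoneOn f (Icc a b)) :
    F b - F a ≤ f a * (b - a) :=
  (convex_Icc a b).image_sub_le_mul_sub_of_deriv_le
    (fun x hx => (hF x hx).continuousAt.continuousWithinAt)
    (fun x hx => (hF x (interior_subset hx)).differentiableAt.differentiableWithinAt)
    (fun x hx => by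
      rw [(hF x (interior_subset hx)).deriv]
      exact hf (left_mem_Icc.2 hab) (interior_subset hx) (interior_subset hx).1)
    a (left_mem_Icc.2 hab) b (right_mem_Icc.2 hab) hab

theorem sub_le_inv_div_inv_sub_inv_mul_sub {x κ δ ζ : ℝ} (hδ : 0 < δ) (hδζ : δ < ζ)
    (hx : -κ ≤ x) (hsmall : δ * (κ + 2 * ζ) ≤ ζ ^ 2) :
    x - ζ ≤ δ⁻¹ / (δ⁻¹ - ζ⁻¹) * (x - δ) := by
  have hζ : 0 < ζ := hδ.trans hδζ
  have hfactor : δ⁻¹ / (δ⁻¹ - ζ⁻¹) = ζ / (ζ - δ) := by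
    rw [div_eq_div_iff (sub_pos.2 (inv_strictAnti₀ hδ hδζ)).ne' (sub_pos.2 hδζ).ne']
    field_simp
  rw [hfactor, div_mul_eq_mul_div, le_div_iff₀ (sub_pos.2 hδζ)]
  nlinarith [mul_le_mul_of_nonneg_left hx hδ.le]

namespace EntropyPinching

variable {N W : ℝ → ℝ}

theorem mul_le_deriv_mul_sub_of_nonpos
    (hC1 : ∀ τ > (0:ℝ), HasDerivAt (fun s => s * N s) (W τ) τ) (hWmono : AntitoneOn W (Ioi 0))
    {a b : ℝ} (ha : 0 < a) (hab : a ≤ b) (hNa : N a ≤ 0) :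
    b * N b ≤ W a * (b - a) := by
  have hIcc : Icc a b ⊆ Ioi 0 := fun x hx => ha.trans_le hx.1
  have := sub_le_mul_sub_of_hasDerivAt_of_antitoneOn hab (fun x hx => hC1 x (hIcc hx))
    (hWmono.mono hIcc)
  nlinarith

theorem inv_div_inv_sub_inv_mul_le_of_pinching
    (hC1 : ∀ τ > (0:ℝ), HasDerivAt (fun s => s * N s) (W τ) τ) (hWmono : AntitoneOn W (Ioi 0))
    (hNmono : AntitoneOn N (Ioi 0))
    (hNle : ∀ τ > (0:ℝ), N τ ≤ 0) {δ ζ τ : ℝ} (hδ : δ ∈ Ioo 0 1) (hpinch : N δ - δ ≤ N δ⁻¹)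
    (hζ : ζ ∈ Ioo δ 1) (hτ : τ ∈ Icc ζ ζ⁻¹) :
    δ⁻¹ / (δ⁻¹ - ζ⁻¹) * (N 1 - δ) ≤ W τ := by
  have hζ0 : 0 < ζ := hδ.1.trans hζ.1
  have hinv : ζ⁻¹ < δ⁻¹ := inv_strictAnti₀ hδ.1 hζ.1
  have hN1 : N 1 - δ ≤ N δ⁻¹ := by
    linarith [hNmono (show δ ∈ Ioi 0 from hδ.1) (mem_Ioi.2 one_pos) hδ.2.le]
  have hconcave : δ⁻¹ * N δ⁻¹ ≤ W ζ⁻¹ * (δ⁻¹ - ζ⁻¹) :=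
    mul_le_deriv_mul_sub_of_nonpos hC1 hWmono (inv_pos.2 hζ0) hinv.le (hNle _ (inv_pos.2 hζ0))
  calc δ⁻¹ / (δ⁻¹ - ζ⁻¹) * (N 1 - δ) ≤ δ⁻¹ / (δ⁻¹ - ζ⁻¹) * N δ⁻¹ := by
        have : 0 < δ⁻¹ - ζ⁻¹ := sub_pos.2 hinv
        have : 0 < δ⁻¹ := inv_pos.2 hδ.1
        gcongr
    _ ≤ W ζ⁻¹ := by rwa [div_mul_eq_mul_div, div_le_iff₀ (sub_pos.2 hinv)]
    _ ≤ W τ := hWmono (show τ ∈ Ioi 0 from hζ0.trans_le hτ.1) (inv_pos.2 hζ0) hτ.2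

end EntropyPinching

theorem stmt_6_general (N W : ℝ → ℝ)
    (hC1 : ∀ τ > (0:ℝ), HasDerivAt (fun s => s * N s) (W τ) τ)
    (hNmono : AntitoneOn N (Set.Ioi 0))
    (hWmono : AntitoneOn W (Set.Ioi 0))
    (hNle : ∀ τ > (0:ℝ), N τ ≤ 0) :
    (∀ δ ∈ Set.Ioo (0:ℝ) 1, N δ⁻¹ ≥ N δ - δ →
      ∀ ζ ∈ Set.Ioo δ 1, ∀ τ ∈ Set.Icc ζ ζ⁻¹,
        (δ⁻¹ / (δ⁻¹ - ζ⁻¹)) * (N 1 - δ) ≤ W τ) ∧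
    (∀ κ > (0:ℝ), ∀ ζ ∈ Set.Ioo (0:ℝ) 1, ∃ δ₀ > (0:ℝ),
      ∀ δ ∈ Set.Ioo (0:ℝ) 1, δ ≤ δ₀ →
        N δ⁻¹ ≥ N δ - δ → N 1 ≥ -κ →
        (∀ τ ∈ Set.Icc δ δ⁻¹, W τ ≤ N τ ∧ N τ ≤ N 1 + δ) →
        ∀ τ ∈ Set.Icc ζ ζ⁻¹, |W τ - N 1| ≤ ζ) := by
  refine ⟨fun δ hδ hpinch ζ hζ τ hτ =>
    EntropyPinching.inv_div_inv_sub_inv_mul_le_of_pinching hC1 hWmono hNmono hNle hδ hpinch hζ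
      hτ, ?_⟩
  rintro κ hκ ζ ⟨hζ0, hζ1⟩
  refine ⟨ζ ^ 2 / (κ + 2 * ζ), by positivity, ?_⟩
  rintro δ hδ hδδ₀ hpinch hκN hbound τ hτ
  have hsmall : δ * (κ + 2 * ζ) ≤ ζ ^ 2 := (le_div_iff₀ (by positivity)).1 hδδ₀
  have hδζ : δ < ζ := by nlinarith [hδ.1]
  have hWτ :=
    EntropyPinching.inv_div_inv_sub_inv_mul_le_of_pinching hC1 hWmono hNmono hNle hδ hpinch
      ⟨hδζ, hζ1⟩ hτ
  have hfactor := sub_le_inv_div_inv_sub_inv_mul_sub hδ.1 hδζ hκN hsmall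
  obtain ⟨hWN, hNN1⟩ := hbound τ ⟨hδζ.le.trans hτ.1, hτ.2.trans (inv_anti₀ hδ.1 hδζ.le)⟩
  rw [abs_le]
  constructor <;> linarith

/-- Entropy pinching (from the proof of Proposition 7.2, equation (7.8)):
N continuously differentiable, non-increasing, nonpositive on (0,∞), with
(d/dτ)(τN(τ)) = W(τ) non-increasing; almost constancy of N over [δ, δ⁻¹] forces
a lower bound on W over [ζ, ζ⁻¹], and (for δ small depending on ζ, κ) almost
constancy of W. -/
theorem stmt_6 (N W : ℝ → ℝ)
    (hC1 : ∀ τ > (0:ℝ), HasDerivAt (fun s => s * N s) (W τ) τ)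
    (hWcont : ContinuousOn W (Set.Ioi 0))
    (hNmono : AntitoneOn N (Set.Ioi 0))
    (hWmono : AntitoneOn W (Set.Ioi 0))
    (hNle : ∀ τ > (0:ℝ), N τ ≤ 0) :
    (∀ δ ∈ Set.Ioo (0:ℝ) 1, N δ⁻¹ ≥ N δ - δ →
      ∀ ζ ∈ Set.Ioo δ 1, ∀ τ ∈ Set.Icc ζ ζ⁻¹,
        (δ⁻¹ / (δ⁻¹ - ζ⁻¹)) * (N 1 - δ) ≤ W τ) ∧
    (∀ κ > (0:ℝ), ∀ ζ ∈ Set.Ioo (0:ℝ) 1, ∃ δ₀ > (0:ℝ),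
      ∀ δ ∈ Set.Ioo (0:ℝ) 1, δ ≤ δ₀ →
        N δ⁻¹ ≥ N δ - δ → N 1 ≥ -κ →
        (∀ τ ∈ Set.Icc δ δ⁻¹, W τ ≤ N τ ∧ N τ ≤ N 1 + δ) →
        ∀ τ ∈ Set.Icc ζ ζ⁻¹, |W τ - N 1| ≤ ζ) :=
  stmt_6_general N W hC1 hNmono hWmono hNle
end
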